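/- Let q = p^k be an odd prime power with q > 3 and let G = PSL₂(q). Then for every involution i ∈ G, the centralizer C_G(i) has cardinality q−1 if q ≡ 1 mod 4, and cardinality q+1 if q ≡ 3 mod 4. -/

import Mathlib

/-!
Lift an involution of `PSL₂(F)` to `A ∈ SL₂(F)`. Then `A²` is scalar while `A` is not, so the
Cayley–Hamilton identity `A² = (tr A) A - 1` forces `tr A = 0` and `A² = -1`. The commutant of such
an `A` in `M₂(F)` is `F[A] = {x + yA}`, and `det (x + yA) = x² + y²`, so `C_{SL₂}(A)` is the conic
`x² + y² = 1`. It has `q - 1` points when `-1 = i²` is a square (put `u = x + iy`) and `q + 1`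
otherwise (stereographic projection from `(-1, 0)`).

The preimage of `C(Ā)` in `SL₂(F)` consists of the elements commuting or anticommuting with `A`.
It contains the centre `{±1}` with quotient `C(Ā)`, and it contains `C_{SL₂}(A)` with index `2`,
because an anticommuting element of determinant `1` exists: multiply any invertible
anticommuting matrix `W` by `x + yA` with `x² + y² = (det W)⁻¹`, which is possible since every
element of a finite field is a sum of two squares. Hence `|C(Ā)| = |C_{SL₂}(A)|`.
-/

/-- `PSL₂(F)`: the quotient of `SL₂(F)` by its center. -/
abbrev PSL2 (F : Type*) [Field F] : Type _ :=
  Matrix.SpecialLinearGroup (Fin 2) F ⧸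
    Subgroup.center (Matrix.SpecialLinearGroup (Fin 2) F)

open Matrix
open scoped MatrixGroups

namespace Matrix

variable {R : Type*} [CommRing R]

theorem mul_self_fin_two (M : Matrix (Fin 2) (Fin 2) R) :
    M * M = M.trace • M - M.det • 1 := by
  ext i j
  fin_cases i <;> fin_cases j <;>
    simp only [Fin.zero_eta, Fin.mk_one, Fin.isValue, mul_apply, Fin.sum_univ_two, trace_fin_two,
      det_fin_two, sub_apply, smul_apply, smul_eq_mul, one_apply_eq, one_apply_ne, ne_eq,
      zero_ne_one, one_ne_zero, not_false_eq_true, mul_one, mul_zero, sub_zero] <;>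
    ring

theorem mul_self_eq_neg_one_of_trace_eq_zero_fin_two {M : Matrix (Fin 2) (Fin 2) R}
    (htr : M.trace = 0) (hdet : M.det = 1) : M * M = -1 := by
  rw [mul_self_fin_two, htr, hdet, zero_smul, one_smul, zero_sub]

theorem det_smul_one_add_smul_fin_two (M : Matrix (Fin 2) (Fin 2) R) (x y : R) :
    (x • 1 + y • M).det = x ^ 2 + x * y * M.trace + y ^ 2 * M.det := by
  simp only [det_fin_two, trace_fin_two, add_apply, smul_apply, one_apply_eq, one_apply_ne,
    Fin.isValue, ne_eq, zero_ne_one, one_ne_zero, not_false_eq_true, smul_eq_mul, mul_one, mul_zero,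
    zero_add]
  ring

variable {F : Type*} [Field F]

theorem eq_smul_one_add_smul_of_commute_fin_two [NeZero (2 : F)] {M B : Matrix (Fin 2) (Fin 2) F}
    (htr : M.trace = 0) (hdet : M.det = 1) (hBM : Commute B M) :
    B = (B.trace / 2) • 1 + (-(M * B).trace / 2) • M := by
  have hBM' := congrFun₂ hBM.eq
  simp only [mul_apply, Fin.sum_univ_two, Fin.isValue, Fin.forall_fin_two] at hBM'
  rw [trace_fin_two] at htr
  rw [det_fin_two] at hdet
  ext i j
  fin_cases i <;> fin_cases j <;>
    simp only [Fin.zero_eta, Fin.mk_one, Fin.isValue, trace_fin_two, mul_apply, Fin.sum_univ_two,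
      add_apply, smul_apply, one_apply_eq, one_apply_ne, ne_eq, zero_ne_one, one_ne_zero,
      not_false_eq_true, smul_eq_mul, mul_one, mul_zero, zero_add] <;>
    field_simp <;>
    grind

theorem exists_det_ne_zero_mul_eq_neg_mul_fin_two {M : Matrix (Fin 2) (Fin 2) F}
    (htr : M.trace = 0) : ∃ W : Matrix (Fin 2) (Fin 2) F, W.det ≠ 0 ∧ W * M = -(M * W) := by
  rw [trace_fin_two] at htr
  have hM11 : M 1 1 = -M 0 0 := by linear_combination htr
  rcases ne_or_eq (M 1 0) 0 with hc | hc
  · refine ⟨!![M 1 0, -2 * M 0 0; 0, -M 1 0], by simp [det_fin_two, hc], ?_⟩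
    ext i j
    fin_cases i <;> fin_cases j <;>
      simp only [Fin.zero_eta, Fin.mk_one, Fin.isValue, mul_apply, of_apply, cons_val',
        cons_val_zero, cons_val_one, cons_val_fin_one, Fin.sum_univ_two, neg_apply, hM11] <;>
      ring
  rcases ne_or_eq (M 0 1) 0 with hb | hb
  · refine ⟨!![M 0 1, 0; -2 * M 0 0, -M 0 1], by simp [det_fin_two, hb], ?_⟩
    ext i j
    fin_cases i <;> fin_cases j <;>
      simp only [Fin.zero_eta, Fin.mk_one, Fin.isValue, mul_apply, of_apply, cons_val',
        cons_val_zero, cons_val_one, cons_val_fin_one, Fin.sum_univ_two, neg_apply, hM11] <;>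
      ring
  · refine ⟨!![0, 1; 1, 0], by simp [det_fin_two], ?_⟩
    ext i j
    fin_cases i <;> fin_cases j <;> simp [mul_apply, Fin.sum_univ_two, hM11, hb, hc]

end Matrix

theorem FiniteField.exists_sq_add_sq {F : Type*} [Field F] [Fintype F] (x : F) :
    ∃ a b : F, a ^ 2 + b ^ 2 = x := by
  by_cases hF : ringChar F = 2
  · obtain ⟨a, rfl⟩ := isSquare_of_char_two hF x
    exact ⟨a, 0, by ring⟩
  · obtain ⟨a, b, hab⟩ := exists_root_sum_quadratic (Polynomial.degree_X_pow 2)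
      (Polynomial.degree_X_pow_sub_C two_pos x) (odd_card_of_char_ne_two hF)
    exact ⟨a, b, by simpa [sub_eq_zero, add_sub_assoc'] using hab⟩

theorem Subgroup.card_mul_relIndex {G : Type*} [Group G] {H K : Subgroup G} (h : H ≤ K) :
    Nat.card H * H.relIndex K = Nat.card K := by
  rw [← relIndex_bot_left, ← relIndex_bot_left]
  exact relIndex_mul_relIndex _ _ _ bot_le h

theorem Subgroup.card_comap_mk' {G : Type*} [Group G] (N : Subgroup G) [N.Normal]
    (H : Subgroup (G ⧸ N)) :
    Nat.card (H.comap (QuotientGroup.mk' N)) = Nat.card N * Nat.card H := by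
  have hN : N ≤ H.comap (QuotientGroup.mk' N) := fun g hg => by
    simp [(QuotientGroup.eq_one_iff g).mpr hg]
  have hker := relIndex_ker (K := H.comap (QuotientGroup.mk' N)) (QuotientGroup.mk' N)
  rw [QuotientGroup.ker_mk', map_comap_eq_self_of_surjective (QuotientGroup.mk'_surjective N)]
    at hker
  rw [← card_mul_relIndex hN, hker]

def circlePoints (F : Type*) [Field F] : Set (F × F) := {v | v.1 ^ 2 + v.2 ^ 2 = 1}

theorem mem_circlePoints {F : Type*} [Field F] {v : F × F} :
    v ∈ circlePoints F ↔ v.1 ^ 2 + v.2 ^ 2 = 1 := Iff.rfl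

section Circle

variable {F : Type*} [Field F]

noncomputable def unitsEquivCirclePoints [NeZero (2 : F)] {i : F} (hi : i ^ 2 = -1) :
    Fˣ ≃ circlePoints F :=
  have hi0 : i ≠ 0 := by rintro rfl; simp at hi
  { toFun u := ⟨(((u : F) + ↑u⁻¹) / 2, ((u : F) - ↑u⁻¹) / (2 * i)), by
      rw [mem_circlePoints]
      field_simp
      linear_combination (((u : F) + ↑u⁻¹) ^ 2 - 4) * hi - 4 * u.mul_inv⟩
    invFun v := ⟨v.1.1 + i * v.1.2, v.1.1 - i * v.1.2,
      by linear_combination mem_circlePoints.mp v.2 - v.1.2 ^ 2 * hi,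
      by linear_combination mem_circlePoints.mp v.2 - v.1.2 ^ 2 * hi⟩
    left_inv u := by ext; field_simp; ring
    right_inv v := by ext <;> simp only [Units.inv_mk, Units.val_mk] <;> field_simp <;> ring }

noncomputable def optionEquivCirclePoints [DecidableEq F] (hF : ¬IsSquare (-1 : F)) :
    Option F ≃ circlePoints F :=
  have h2 : (2 : F) ≠ 0 := fun h => hF ⟨1, by linear_combination -h⟩
  have hden (t : F) : 1 + t ^ 2 ≠ 0 := fun h => hF ⟨t, by linear_combination -h⟩
  { toFun
      | none => ⟨(-1, 0), by simp [mem_circlePoints]⟩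
      | some t => ⟨((1 - t ^ 2) / (1 + t ^ 2), 2 * t / (1 + t ^ 2)), by
          rw [mem_circlePoints]; field_simp [hden t]; ring⟩
    invFun v := if v.1.1 = -1 then none else some (v.1.2 / (v.1.1 + 1))
    left_inv := by
      rintro (_ | t)
      · simp
      · have ht := hden t
        have hne : (1 - t ^ 2) / (1 + t ^ 2) ≠ -1 := by
          rw [Ne, div_eq_iff ht]
          exact fun h => h2 (by linear_combination h)
        have hsum : (1 - t ^ 2) / (1 + t ^ 2) + 1 = 2 / (1 + t ^ 2) := by
          field_simp; ring
        simp only [hne, if_false, Option.some.injEq, hsum]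
        field_simp
    right_inv := by
      rintro ⟨⟨x, y⟩, hv⟩
      replace hv : x ^ 2 + y ^ 2 = 1 := hv
      by_cases hx : x = -1
      · have hy : y = 0 := pow_eq_zero_iff two_ne_zero |>.mp (by linear_combination hv - (x - 1) * hx)
        simp [hx, hy]
      · have hx1 : x + 1 ≠ 0 := fun h => hx (by linear_combination h)
        have hsum : (x + 1) ^ 2 + y ^ 2 = 2 * (x + 1) := by linear_combination hv
        simp only [hx, if_false]
        ext
        · field_simp
          rw [hsum]
          field_simp
          linear_combination -hv
        · field_simp
          rw [hsum]
          field_simp }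

theorem card_circlePoints_of_sq_eq_neg_one [NeZero (2 : F)] {i : F} (hi : i ^ 2 = -1) :
    Nat.card (circlePoints F) = Nat.card F - 1 := by
  rw [← Nat.card_congr (unitsEquivCirclePoints hi), Nat.card_units]

theorem card_circlePoints_of_not_isSquare_neg_one [Finite F] (hF : ¬IsSquare (-1 : F)) :
    Nat.card (circlePoints F) = Nat.card F + 1 := by
  classical
  rw [← Nat.card_congr (optionEquivCirclePoints hF), Finite.card_option]

end Circle

namespace Matrix.SpecialLinearGroup

variable {F : Type*} [Field F]

theorem fin_two_mem_center_iff {A : SL(2, F)} :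
    A ∈ Subgroup.center SL(2, F) ↔ A = 1 ∨ A = -1 := by
  rw [mem_center_iff]
  constructor
  · rintro ⟨r, hr, hA⟩
    rcases mul_self_eq_one_iff.mp (by simpa [sq] using hr) with rfl | rfl
    · left; ext i j; simp [← hA, one_apply]
    · right; ext i j; simp [← hA, coe_neg, diagonal_apply, one_apply, apply_ite]
  · rintro (rfl | rfl)
    · exact ⟨1, by simp, by ext; simp⟩
    · exact ⟨-1, by simp, by ext i j; simp [coe_neg, diagonal_apply, one_apply, apply_ite]⟩

theorem fin_two_trace_eq_zero_of_mul_self_mem_center {A : SL(2, F)}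
    (hA : A ∉ Subgroup.center SL(2, F)) (hAA : A * A ∈ Subgroup.center SL(2, F)) :
    (A : Matrix (Fin 2) (Fin 2) F).trace = 0 := by
  obtain ⟨r, -, hr⟩ := mem_center_iff.mp hAA
  by_contra ht
  apply hA
  have hscalar : (A : Matrix (Fin 2) (Fin 2) F) =
      (A : Matrix (Fin 2) (Fin 2) F).trace⁻¹ • (scalar (Fin 2) r + 1) := by
    have := mul_self_fin_two (A : Matrix (Fin 2) (Fin 2) F)
    rw [← coe_mul, ← hr, A.2, one_smul, eq_sub_iff_add_eq] at this
    rw [this, inv_smul_smul₀ ht]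
  refine Subgroup.mem_center_iff.mpr fun g => Subtype.ext ?_
  rw [coe_mul, coe_mul, hscalar, mul_smul_comm, smul_mul_assoc, mul_add, add_mul, mul_one, one_mul,
    (scalar_commute r (Commute.all r) _).eq]

theorem fin_two_exists_mul_eq_neg_mul [Fintype F] {A : SL(2, F)}
    (hA : (A : Matrix (Fin 2) (Fin 2) F).trace = 0) : ∃ w : SL(2, F), w * A = -(A * w) := by
  obtain ⟨W, hW, hWA⟩ := exists_det_ne_zero_mul_eq_neg_mul_fin_two hA
  obtain ⟨x, y, hxy⟩ := FiniteField.exists_sq_add_sq W.det⁻¹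
  set P := x • 1 + y • (A : Matrix (Fin 2) (Fin 2) F)
  have hPA : Commute P A := ((Commute.one_left _).smul_left x).add_left ((Commute.refl _).smul_left y)
  refine ⟨⟨W * P, ?_⟩, Subtype.ext ?_⟩
  · rw [det_mul, det_smul_one_add_smul_fin_two, hA, A.2]
    linear_combination W.det * hxy + mul_inv_cancel₀ hW
  · change W * P * A = -(A * (W * P))
    rw [mul_assoc, hPA.eq, ← mul_assoc, hWA, neg_mul, mul_assoc]

variable [NeZero (2 : F)]

theorem fin_two_one_ne_neg_one : (1 : SL(2, F)) ≠ -1 := by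
  intro h
  have := congrArg (fun A : SL(2, F) => (A : Matrix (Fin 2) (Fin 2) F) 0 0) h
  simp only [coe_one, coe_neg, neg_apply, one_apply_eq] at this
  exact two_ne_zero (α := F) (by linear_combination this)

theorem fin_two_ne_neg_self (A : SL(2, F)) : A ≠ -A := fun h =>
  fin_two_one_ne_neg_one <| by rw [← inv_mul_cancel A]; nth_rw 2 [h]; rw [mul_neg]

theorem fin_two_card_center : Nat.card (Subgroup.center SL(2, F)) = 2 := by
  have : (Subgroup.center SL(2, F) : Set SL(2, F)) = {1, -1} :=
    Set.ext fun _ => fin_two_mem_center_iff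
  rw [← SetLike.coe_sort_coe, this, Nat.card_coe_set_eq, Set.ncard_pair fin_two_one_ne_neg_one]

theorem fin_two_eq_smul_one_add_smul_of_mem_centralizer {A B : SL(2, F)}
    (hA : (A : Matrix (Fin 2) (Fin 2) F).trace = 0) (hB : B ∈ Subgroup.centralizer {A}) :
    (B : Matrix (Fin 2) (Fin 2) F) = ((B : Matrix (Fin 2) (Fin 2) F).trace / 2) • 1 +
      (-(A * B : Matrix (Fin 2) (Fin 2) F).trace / 2) • (A : Matrix (Fin 2) (Fin 2) F) :=
  eq_smul_one_add_smul_of_commute_fin_two hA A.2 <| by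
    rw [Commute, SemiconjBy, ← coe_mul, ← coe_mul, Subgroup.mem_centralizer_singleton_iff.mp hB]

noncomputable def centralizerEquivCirclePoints (A : SL(2, F))
    (hA : (A : Matrix (Fin 2) (Fin 2) F).trace = 0) :
    Subgroup.centralizer {A} ≃ circlePoints F where
  -- `tr (x + yA) = 2x` and `tr (A (x + yA)) = -2y`, since `tr A = 0` and `A² = -1`.
  toFun B := ⟨((B : Matrix (Fin 2) (Fin 2) F).trace / 2,
      -(A * B : Matrix (Fin 2) (Fin 2) F).trace / 2), by
    have hdet := (B : SL(2, F)).2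
    rw [fin_two_eq_smul_one_add_smul_of_mem_centralizer hA B.2, det_smul_one_add_smul_fin_two, hA,
      A.2] at hdet
    rw [mem_circlePoints]
    linear_combination hdet⟩
  invFun v := ⟨⟨v.1.1 • 1 + v.1.2 • (A : Matrix (Fin 2) (Fin 2) F), by
      rw [det_smul_one_add_smul_fin_two, hA, A.2]
      linear_combination mem_circlePoints.mp v.2⟩,
    Subgroup.mem_centralizer_singleton_iff.mpr <| Subtype.ext <| by
      change _ * (A : Matrix (Fin 2) (Fin 2) F) = (A : Matrix (Fin 2) (Fin 2) F) * _
      simp only [mul_add, add_mul, smul_mul_assoc, mul_smul_comm, one_mul, mul_one]⟩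
  left_inv B := Subtype.ext <| Subtype.ext <|
    (fin_two_eq_smul_one_add_smul_of_mem_centralizer hA B.2).symm
  right_inv v := by
    have hAA := mul_self_eq_neg_one_of_trace_eq_zero_fin_two hA A.2
    ext <;> simp [mul_add, hAA, hA, mul_div_cancel_right₀ _ (two_ne_zero' F)]

end Matrix.SpecialLinearGroup

namespace PSL2

open Matrix.SpecialLinearGroup

variable {F : Type*} [Field F]

theorem mem_comap_centralizer_iff {A g : SL(2, F)} :
    g ∈ (Subgroup.centralizer {(A : PSL2 F)}).comap (QuotientGroup.mk' _) ↔
      g * A = A * g ∨ g * A = -(A * g) := by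
  rw [Subgroup.mem_comap, Subgroup.mem_centralizer_singleton_iff, QuotientGroup.mk'_apply,
    ← QuotientGroup.mk_mul, ← QuotientGroup.mk_mul, QuotientGroup.eq, fin_two_mem_center_iff,
    inv_mul_eq_one, inv_mul_eq_iff_eq_mul, mul_neg_one, ← neg_eq_iff_eq_neg, eq_comm (a := -(A * g))]

theorem trace_eq_zero_of_orderOf_mk_eq_two {A : SL(2, F)} (h : orderOf (A : PSL2 F) = 2) :
    (A : Matrix (Fin 2) (Fin 2) F).trace = 0 := by
  refine fin_two_trace_eq_zero_of_mul_self_mem_center ?_ ?_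
  · rw [← QuotientGroup.eq_one_iff, ← orderOf_eq_one_iff, h]
    omega
  · rw [← QuotientGroup.eq_one_iff, QuotientGroup.mk_mul, ← sq]
    simpa [h] using pow_orderOf_eq_one (A : PSL2 F)

variable [NeZero (2 : F)]

theorem relIndex_centralizer_comap_centralizer [Fintype F] {A : SL(2, F)}
    (hA : (A : Matrix (Fin 2) (Fin 2) F).trace = 0) :
    (Subgroup.centralizer {A}).relIndex
      ((Subgroup.centralizer {(A : PSL2 F)}).comap (QuotientGroup.mk' _)) = 2 := by
  obtain ⟨w, hw⟩ := fin_two_exists_mul_eq_neg_mul hA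
  refine Subgroup.relIndex_eq_two_iff.mpr ⟨w, mem_comap_centralizer_iff.mpr (Or.inr hw), ?_⟩
  intro b hb
  simp only [Subgroup.mem_centralizer_singleton_iff]
  have hbw : b * w * A = -(b * A * w) := by rw [mul_assoc, hw, mul_neg, ← mul_assoc]
  rcases mem_comap_centralizer_iff.mp hb with hbA | hbA
  · exact Or.inr ⟨hbA, fun h => fin_two_ne_neg_self _ (h.symm.trans (by rw [hbw, hbA, mul_assoc]))⟩
  · exact Or.inl ⟨by rw [hbw, hbA, neg_mul, neg_neg, mul_assoc],
      fun h => fin_two_ne_neg_self _ (h.symm.trans hbA)⟩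

theorem card_centralizer_mk [Fintype F] {A : SL(2, F)}
    (hA : (A : Matrix (Fin 2) (Fin 2) F).trace = 0) :
    Nat.card (Subgroup.centralizer {(A : PSL2 F)}) = Nat.card (Subgroup.centralizer {A}) := by
  have hle : Subgroup.centralizer {A} ≤
      (Subgroup.centralizer {(A : PSL2 F)}).comap (QuotientGroup.mk' _) := fun g hg =>
    mem_comap_centralizer_iff.mpr (Or.inl (Subgroup.mem_centralizer_singleton_iff.mp hg))
  have h := Subgroup.card_comap_mk' _ (Subgroup.centralizer {(A : PSL2 F)})
  rw [← Subgroup.card_mul_relIndex hle, relIndex_centralizer_comap_centralizer hA,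
    fin_two_card_center] at h
  omega

end PSL2

open PSL2 Matrix.SpecialLinearGroup in
theorem card_centralizer_involution_psl2_general (p k q : ℕ) (hpodd : Odd p)
    (hq : q = p ^ k)
    (F : Type*) [Field F] [Fintype F] (hF : Fintype.card F = q) :
    ∀ i : PSL2 F, orderOf i = 2 →
      (q % 4 = 1 → Nat.card (Subgroup.centralizer ({i} : Set (PSL2 F))) = q - 1) ∧
      (q % 4 = 3 → Nat.card (Subgroup.centralizer ({i} : Set (PSL2 F))) = q + 1) := by
  have hq_odd : q % 2 = 1 := Nat.odd_iff.mp (hq ▸ hpodd.pow)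
  have : NeZero (2 : F) := ⟨Ring.two_ne_zero fun h => by
    have := FiniteField.even_card_of_char_two h
    omega⟩
  rintro i hi
  obtain ⟨A, rfl⟩ := QuotientGroup.mk_surjective i
  have hA := trace_eq_zero_of_orderOf_mk_eq_two hi
  rw [card_centralizer_mk hA, Nat.card_congr (centralizerEquivCirclePoints A hA)]
  constructor
  · intro hq1
    obtain ⟨r, hr⟩ := FiniteField.isSquare_neg_one_iff.mpr (by omega : Fintype.card F % 4 ≠ 3)
    rw [card_circlePoints_of_sq_eq_neg_one (i := r) (by rw [hr, sq]), Nat.card_eq_fintype_card, hF]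
  · intro hq3
    rw [card_circlePoints_of_not_isSquare_neg_one
      (FiniteField.isSquare_neg_one_iff.not_left.mpr (by omega)), Nat.card_eq_fintype_card, hF]

/-- Let `q = p^k` be an odd prime power with `q > 3` and
`G = PSL₂(q)`.  Then for every involution `i ∈ G` the centralizer `C_G(i)` has
cardinality `q−1` if `q ≡ 1 mod 4` and `q+1` if `q ≡ 3 mod 4`. -/
theorem card_centralizer_involution_psl2 (p k q : ℕ) (hp : p.Prime) (hpodd : Odd p)
    (hq : q = p ^ k) (hq3 : 3 < q)
    (F : Type*) [Field F] [Fintype F] (hF : Fintype.card F = q) :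
    ∀ i : PSL2 F, orderOf i = 2 →
      (q % 4 = 1 → Nat.card (Subgroup.centralizer ({i} : Set (PSL2 F))) = q - 1) ∧
      (q % 4 = 3 → Nat.card (Subgroup.centralizer ({i} : Set (PSL2 F))) = q + 1) :=
  card_centralizer_involution_psl2_general p k q hpodd hq F hF
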